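/- There is no surjective local homeomorphism from a compact Hausdorff space onto the twisted sphere X: if Z is a compact Hausdorff topological space and f : Z → X is a local homeomorphism, then f is not surjective. -/

import Mathlib

noncomputable section

/-- The 2-sphere, realized as the unit sphere `{(c,z) : |c|² + z² = 1}` in `ℂ × ℝ`,
with the subspace topology. -/
def TwoSphere : Set (ℂ × ℝ) := {p | ‖p.1‖ ^ 2 + p.2 ^ 2 = 1}

/-- The relation `r₀` on `S²`: `r₀ (c,z) (c',z')` iff `z ≠ 0`, `c' = -c` and `z' = z`. -/
def sphRel (a b : TwoSphere) : Prop :=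
  a.1.2 ≠ 0 ∧ b.1.1 = -a.1.1 ∧ b.1.2 = a.1.2

/-- The twisted sphere `X`: the quotient of `S²` by the equivalence relation generated
by `r₀`, with the quotient topology. -/
abbrev TwistedSphere : Type := Quot (Relation.EqvGen sphRel)

/-- The quotient map `q : S² → X`. -/
abbrev sphQ : TwoSphere → TwistedSphere := Quot.mk (Relation.EqvGen sphRel)

/-!
Suppose `f` is onto and pick `z₀` over the north pole. The closed caps `{height ≥ r}`, `r > 0`,
are Hausdorff, so `f` is a finite covering over each of them and the meridians lift from `z₀`. As
the lift of the meridian of longitude `θ` approaches the equator it converges to a point over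
`(c θ, 0)` with `c θ ^ 2 = exp (2 θ I)`, and a chart at that point shows that `c` is continuous.
Off the equator the meridians of longitude `θ` and `θ + π` coincide in `X`, so `c` is
`π`-periodic, which a continuous square root of `exp (2 θ I)` cannot be.
-/

open Complex Real Set Filter Topology Function

theorem Relation.EqvGen.apply_eq {α β : Type*} {r : α → α → Prop} {g : α → β}
    (h : ∀ a b, r a b → g a = g b) {a b : α} (hab : Relation.EqvGen r a b) : g a = g b := by
  induction hab with
  | rel a b hab => exact h a b hab
  | refl => rfl
  | symm _ _ _ ih => exact ih.symm
  | trans _ _ _ _ _ ih₁ ih₂ => exact ih₁.trans ih₂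

theorem IsLocalHomeomorph.restrictPreimage {X Y : Type*} [TopologicalSpace X] [TopologicalSpace Y]
    {f : X → Y} (hf : IsLocalHomeomorph f) (s : Set Y) :
    IsLocalHomeomorph (s.restrictPreimage f) := by
  rw [isLocalHomeomorph_iff_isOpenEmbedding_restrict] at hf ⊢
  intro x
  obtain ⟨U, hU, hfU⟩ := hf x
  let φ : ((↑) ⁻¹' U : Set (f ⁻¹' s)) ≃ₜ (U.domRestrict f) ⁻¹' s :=
    { toFun := fun v => ⟨⟨v.1.1, v.2⟩, v.1.2⟩
      invFun := fun w => ⟨⟨w.1.1, w.2⟩, w.1.2⟩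
      left_inv := fun _ => rfl
      right_inv := fun _ => rfl
      continuous_toFun := by fun_prop
      continuous_invFun := by fun_prop }
  exact ⟨_, continuous_subtype_val.continuousAt.preimage_mem_nhds hU,
    (hfU.restrictPreimage s).comp φ.isOpenEmbedding⟩

theorem IsLocalHomeomorph.isCoveringMap_restrictPreimage {X Y : Type*} [TopologicalSpace X]
    [TopologicalSpace Y] [CompactSpace X] [T2Space X] {f : X → Y} (hf : IsLocalHomeomorph f)
    {s : Set Y} (hs : IsClosed s) [T2Space s] : IsCoveringMap (s.restrictPreimage f) :=
  have : CompactSpace (f ⁻¹' s) :=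
    isCompact_iff_compactSpace.mp (hs.preimage hf.continuous).isCompact
  isLocalHomeomorph_iff_isCoveringMap.mp (hf.restrictPreimage s)

theorem IsLocalHomeomorph.tendsto_nhdsGT_of_lift {X Y : Type*} [TopologicalSpace X]
    [TopologicalSpace Y] [T2Space X] {f : X → Y} (hf : IsLocalHomeomorph f)
    {e : OpenPartialHomeomorph X Y} (hfe : f = e) {γ : ℝ → Y} (hγ : Continuous γ) {a b : ℝ}
    (hab : a < b) (hγe : MapsTo γ (Icc a b) e.target) {μ : ℝ → X} (hμ : ContinuousOn μ (Ioc a b))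
    (hμγ : ∀ t ∈ Ioc a b, f (μ t) = γ t) (hμb : μ b ∈ e.source) :
    Tendsto μ (𝓝[>] a) (𝓝 (e.symm (γ a))) := by
  have hb : b ∈ Ioc a b := right_mem_Ioc.2 hab
  have heq : EqOn μ (e.symm ∘ γ) (Ioc a b) :=
    (T2Space.isSeparatedMap f).eqOn_of_comp_eqOn hf.isLocallyInjective isPreconnected_Ioc hμ
      (e.continuousOn_symm.comp hγ.continuousOn (hγe.mono_left Ioc_subset_Icc_self))
      (fun t ht => by
        rw [comp_apply, comp_apply, hμγ t ht, hfe, comp_apply, e.right_inv (hγe ⟨ht.1.le, ht.2⟩)])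
      hb
      (by rw [comp_apply, ← hμγ b hb, hfe, e.left_inv hμb])
  have hcont : ContinuousAt (e.symm ∘ γ) a :=
    (e.continuousAt_symm (hγe (left_mem_Icc.2 hab.le))).comp hγ.continuousAt
  exact (hcont.tendsto.mono_left nhdsWithin_le_nhds).congr'
    (eventuallyEq_of_mem (Ioc_mem_nhdsGT hab) heq.symm)

theorem not_periodic_of_sq_eq_exp_sq {c : ℝ → ℂ} (hc : Continuous c)
    (hsq : ∀ θ, c θ ^ 2 = exp (θ * I) ^ 2) : ¬ Periodic c π := by
  intro hper
  rcases isPreconnected_univ.eq_or_eq_neg_of_sq_eq hc.continuousOn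
    (by fun_prop : Continuous fun θ : ℝ => exp (θ * I)).continuousOn (fun θ _ => hsq θ)
    (fun _ => exp_ne_zero _) with h | h <;>
  · have h0 := hper 0
    rw [h (mem_univ _), h (mem_univ _)] at h0
    norm_num [exp_pi_mul_I] at h0

theorem exists_pos_frequently_Icc_subset {S : Set ℝ} (hS : S ∈ 𝓝 0) {P : ℝ → Prop}
    (hP : ∃ᶠ t in 𝓝[>] 0, P t) : ∃ t, 0 < t ∧ P t ∧ Icc 0 t ⊆ S := by
  obtain ⟨ε, hε, hball⟩ := Metric.mem_nhds_iff.mp hS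
  obtain ⟨t, hPt, ht⟩ := (hP.and_eventually (Ioo_mem_nhdsGT hε)).exists
  refine ⟨t, ht.1, hPt, fun u hu => hball ?_⟩
  rw [Real.ball_eq_Ioo]
  exact ⟨by linarith [hu.1], by linarith [hu.2, ht.2]⟩

namespace TwistedSphere

def lift {β : Type*} (g : TwoSphere → β) (hg : ∀ a b, sphRel a b → g a = g b) :
    TwistedSphere → β :=
  Quot.lift g fun _ _ hab => hab.apply_eq hg

@[simp]
theorem lift_sphQ {β : Type*} (g : TwoSphere → β) (hg : ∀ a b, sphRel a b → g a = g b)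
    (a : TwoSphere) : lift g hg (sphQ a) = g a :=
  rfl

def height : TwistedSphere → ℝ :=
  lift (fun a => a.1.2) fun _ _ h => h.2.2.symm

def sqCoord : TwistedSphere → ℂ :=
  lift (fun a => a.1.1 ^ 2) fun _ _ h => by rw [h.2.1, neg_sq]

/-- The horizontal coordinate of a point of the equator (and `0` off the equator, where only
its square is well defined). -/
def equatorCoord : TwistedSphere → ℂ :=
  lift (fun a => if a.1.2 = 0 then a.1.1 else 0) fun _ _ h => by simp [h.1, h.2.2]

theorem continuous_height : Continuous height :=
  continuous_quot_lift _ continuous_subtype_val.snd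

theorem continuous_sqCoord : Continuous sqCoord :=
  continuous_quot_lift _ (continuous_subtype_val.fst.pow 2)

theorem eq_of_sqCoord_eq {x y : TwistedSphere} (hx : height x ≠ 0)
    (hc : sqCoord x = sqCoord y) (hz : height x = height y) : x = y := by
  induction x using Quot.ind with | _ a =>
  induction y using Quot.ind with | _ b =>
  change a.1.1 ^ 2 = b.1.1 ^ 2 at hc
  change a.1.2 = b.1.2 at hz
  rcases eq_or_eq_neg_of_sq_eq_sq _ _ hc with h | h
  · rw [Subtype.ext (Prod.ext h hz)]
  · exact Quot.sound (.rel _ _ ⟨hx, by rw [h, neg_neg], hz.symm⟩)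

/-- Longitude `θ`, height `t` clamped to `[0, 1]`. -/
def meridian (θ t : ℝ) : TwistedSphere :=
  sphQ ⟨(exp (θ * I) * √(1 - (projIcc 0 1 zero_le_one t : ℝ) ^ 2),
    projIcc 0 1 zero_le_one t), by
    have ⟨h₀, h₁⟩ := (projIcc 0 1 zero_le_one t).2
    have : 0 ≤ 1 - (projIcc 0 1 zero_le_one t : ℝ) ^ 2 := by nlinarith
    simp [TwoSphere, Complex.norm_exp_ofReal_mul_I, Real.sq_sqrt this]⟩

theorem continuous_meridian : Continuous fun p : ℝ × ℝ => meridian p.1 p.2 :=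
  continuous_quot_mk.comp <| Continuous.subtype_mk (by fun_prop) _

theorem height_meridian (θ t : ℝ) : height (meridian θ t) = projIcc 0 1 zero_le_one t := rfl

theorem height_meridian_zero (θ : ℝ) : height (meridian θ 0) = 0 := by
  simp [meridian, height, projIcc_left]

theorem sqCoord_meridian_zero (θ : ℝ) : sqCoord (meridian θ 0) = exp (θ * I) ^ 2 := by
  simp [meridian, sqCoord, projIcc_left]

theorem equatorCoord_meridian_zero (θ : ℝ) : equatorCoord (meridian θ 0) = exp (θ * I) := by
  simp [meridian, equatorCoord, projIcc_left]

theorem meridian_one (θ θ' : ℝ) : meridian θ 1 = meridian θ' 1 := by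
  simp [meridian, projIcc_right]

theorem meridian_add_pi (θ : ℝ) {t : ℝ} (ht : 0 < t) : meridian (θ + π) t = meridian θ t := by
  refine Quot.sound (.symm _ _ (.rel _ _ ⟨?_, ?_, rfl⟩))
  · exact (lt_max_of_lt_right (lt_min one_pos ht)).ne'
  · simp [add_mul, Complex.exp_add]

theorem meridian_add_of_pos {θ d t : ℝ} (hd : d = 0 ∨ d = π) (ht : 0 < t) :
    meridian (θ + d) t = meridian θ t := by
  rcases hd with rfl | rfl
  · rw [add_zero]
  · exact meridian_add_pi θ ht

theorem eq_meridian_zero {x : TwistedSphere} {θ : ℝ} (hz : height x = 0)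
    (hc : sqCoord x = exp (θ * I) ^ 2) :
    ∃ d : ℝ, (d = 0 ∨ d = π) ∧ x = meridian (θ + d) 0 := by
  induction x using Quot.ind with | _ a =>
  change a.1.2 = 0 at hz
  change a.1.1 ^ 2 = _ at hc
  have hpt : ∀ d : ℝ, a.1.1 = exp ((θ + d : ℝ) * I) → sphQ a = meridian (θ + d) 0 := by
    intro d hd
    congr 1
    exact Subtype.ext (Prod.ext (by simp [hd, projIcc_left]) (by simp [hz, projIcc_left]))
  rcases eq_or_eq_neg_of_sq_eq_sq _ _ hc with h | h
  · exact ⟨0, .inl rfl, hpt 0 (by simpa using h)⟩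
  · exact ⟨π, .inr rfl, hpt π (by simp [h, add_mul, Complex.exp_add])⟩

def polarCap (r : ℝ) : Set TwistedSphere := {x | r ≤ height x}

theorem isClosed_polarCap (r : ℝ) : IsClosed (polarCap r) :=
  isClosed_le continuous_const continuous_height

theorem t2Space_polarCap {r : ℝ} (hr : 0 < r) : T2Space (polarCap r) :=
  .of_injective_continuous (f := fun x : polarCap r => (sqCoord x, height x))
    (fun x y h => Subtype.ext <| eq_of_sqCoord_eq (by linarith [x.2.out])
      (congrArg Prod.fst h) (congrArg Prod.snd h))
    ((continuous_sqCoord.comp continuous_subtype_val).prodMk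
      (continuous_height.comp continuous_subtype_val))

theorem meridian_mem_polarCap {r s t : ℝ} (hr : r ≤ 1) (hs : s ∈ unitInterval) (θ : ℝ) :
    meridian θ (1 - s * (1 - max r t)) ∈ polarCap r := by
  have hu : r ≤ 1 - s * (1 - max r t) := by
    nlinarith [mul_nonneg (sub_nonneg.2 hs.2) (sub_nonneg.2 hr),
      mul_nonneg hs.1 (sub_nonneg.2 (le_max_left r t))]
  exact le_max_of_le_right (le_min hr hu)

section Lifts

variable {Z : Type*} [TopologicalSpace Z] [T2Space Z] {f : Z → TwistedSphere}

theorem exists_lift_polarCap [CompactSpace Z] (hf : IsLocalHomeomorph f) {z₀ : Z}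
    (hz₀ : f z₀ = meridian 0 1) {r : ℝ} (hr₀ : 0 < r) (hr₁ : r ≤ 1) :
    ∃ Γ : unitInterval × (ℝ × ℝ) → Z, Continuous Γ ∧
      (∀ s θ t, f (Γ (s, θ, t)) = meridian θ (1 - s * (1 - max r t))) ∧ ∀ a, Γ (0, a) = z₀ := by
  have := t2Space_polarCap hr₀
  have cov := hf.isCoveringMap_restrictPreimage (isClosed_polarCap r)
  let H : C(unitInterval × (ℝ × ℝ), polarCap r) :=
    ⟨fun p => ⟨_, meridian_mem_polarCap hr₁ p.1.2 p.2.1 (t := p.2.2)⟩,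
      (continuous_meridian.comp (by fun_prop : Continuous fun p : unitInterval × (ℝ × ℝ) =>
        (p.2.1, 1 - p.1 * (1 - max r p.2.2)))).subtype_mk _⟩
  let lift₀ : C(ℝ × ℝ, f ⁻¹' polarCap r) :=
    .const _ ⟨z₀, show r ≤ height (f z₀) by rwa [hz₀, height_meridian, projIcc_right]⟩
  have H_0 : ∀ a, H (0, a) = (polarCap r).restrictPreimage f (lift₀ a) :=
    fun a => Subtype.ext <| by simpa [H, lift₀, hz₀] using meridian_one a.1 0
  exact ⟨fun p => cov.liftHomotopy H lift₀ H_0 p, by fun_prop,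
    fun s θ t => congrArg Subtype.val (congr_fun (cov.liftHomotopy_lifts H lift₀ H_0) (s, θ, t)),
    fun a => congrArg Subtype.val (cov.liftHomotopy_zero H lift₀ H_0 a)⟩

theorem exists_meridianLift [CompactSpace Z] (hf : IsLocalHomeomorph f) {z₀ : Z}
    (hz₀ : f z₀ = meridian 0 1) :
    ∃ μ : ℝ → ℝ → Z, ContinuousOn (uncurry μ) (univ ×ˢ Ioi 0) ∧
      (∀ θ t, 0 < t → f (μ θ t) = meridian θ t) ∧ ∀ θ, μ θ 1 = z₀ := by
  have : Nonempty Z := ⟨z₀⟩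
  choose! Γ hΓc hΓf hΓ0 using fun r (hr : r ∈ Ioc (0 : ℝ) 1) =>
    exists_lift_polarCap hf hz₀ hr.1 hr.2
  have hpath : ∀ r ∈ Ioc (0 : ℝ) 1, ∀ θ t, Continuous fun s => Γ r (s, θ, t) := fun r hr θ t =>
    (hΓc r hr).comp (continuous_id.prodMk continuous_const)
  have hagree : ∀ r ∈ Ioc (0 : ℝ) 1, ∀ r' ∈ Ioc (0 : ℝ) 1, ∀ θ t, r ≤ t → r' ≤ t →
      Γ r (1, θ, t) = Γ r' (1, θ, t) := by
    intro r hr r' hr' θ t hrt hr't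
    refine congr_fun ((T2Space.isSeparatedMap f).eq_of_comp_eq hf.isLocallyInjective
      (hpath r hr θ t) (hpath r' hr' θ t) (funext fun s => ?_) 0
      (by rw [hΓ0 r hr, hΓ0 r' hr'])) 1
    simp only [comp_apply, hΓf r hr, hΓf r' hr', max_eq_right hrt, max_eq_right hr't]
  have hmin : ∀ {t : ℝ}, 0 < t → min t 1 ∈ Ioc (0 : ℝ) 1 :=
    fun ht => ⟨lt_min ht one_pos, min_le_right _ _⟩
  refine ⟨fun θ t => Γ (min t 1) (1, θ, t), ?_, fun θ t ht => ?_, fun θ => ?_⟩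
  · -- near height `t₀` these are the lifts over the single cap of level `min (t₀ / 2) 1`
    rintro ⟨θ₀, t₀⟩ ⟨-, ht₀ : 0 < t₀⟩
    refine (((hΓc _ (hmin (half_pos ht₀))).comp
      (continuous_const.prodMk continuous_id : Continuous fun p : ℝ × ℝ => ((1 : unitInterval), p))
      ).continuousAt.congr ?_).continuousWithinAt
    filter_upwards [continuous_snd.continuousAt.eventually (lt_mem_nhds (half_lt_self ht₀))]
      with p hp
    exact hagree _ (hmin (half_pos ht₀)) _ (hmin (by linarith)) p.1 p.2
      ((min_le_left _ _).trans hp.le) (min_le_left _ _)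
  · rw [hΓf _ (hmin ht), max_eq_right (min_le_left _ _)]
    simp
  · show Γ (min 1 1) (1, θ, 1) = z₀
    rw [min_self]
    refine congr_fun ((T2Space.isSeparatedMap f).eq_of_comp_eq hf.isLocallyInjective
      (hpath 1 ⟨one_pos, le_rfl⟩ θ 1) continuous_const (funext fun s => ?_) 0
      (hΓ0 _ ⟨one_pos, le_rfl⟩ _)) 1
    simp [hΓf 1 ⟨one_pos, le_rfl⟩, hz₀, meridian_one θ 0]

theorem exists_tendsto_nhdsGT_zero [CompactSpace Z] (hf : IsLocalHomeomorph f) {θ : ℝ}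
    {ν : ℝ → Z} (hν : ContinuousOn ν (Ioi 0)) (hνf : ∀ t, 0 < t → f (ν t) = meridian θ t) :
    ∃ w d, (d = 0 ∨ d = π) ∧ f w = meridian (θ + d) 0 ∧ Tendsto ν (𝓝[>] 0) (𝓝 w) := by
  obtain ⟨p, -, hp⟩ := isCompact_univ.exists_mapClusterPt (f := 𝓝[>] (0 : ℝ)) (u := ν) (by simp)
  let Φ : TwistedSphere → ℂ × ℝ := fun x => (sqCoord x, height x)
  have hΦ : Φ (f p) = Φ (meridian θ 0) := by
    have hlim : Tendsto (Φ ∘ f ∘ ν) (𝓝[>] 0) (𝓝 (Φ (meridian θ 0))) := by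
      refine (((continuous_sqCoord.prodMk continuous_height).comp continuous_meridian).tendsto
        (θ, 0) |>.comp (tendsto_nhdsWithin_of_tendsto_nhds
          (continuous_const.prodMk continuous_id).continuousAt)).congr' ?_
      filter_upwards [self_mem_nhdsWithin] with t ht
      simp [Φ, hνf t ht]
    exact eq_of_nhds_neBot <| (hp.continuousAt_comp ((continuous_sqCoord.prodMk
      continuous_height).comp hf.continuous).continuousAt).clusterPt.mono hlim
  obtain ⟨d, hd, hfp⟩ := eq_meridian_zero
    (by simpa [Φ, height_meridian_zero] using congrArg Prod.snd hΦ)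
    (by simpa [Φ, sqCoord_meridian_zero] using congrArg Prod.fst hΦ)
  obtain ⟨e, hpe, hfe⟩ := hf p
  have hγ : Continuous fun t => meridian (θ + d) t :=
    continuous_meridian.comp (continuous_const.prodMk continuous_id)
  obtain ⟨t₁, ht₁, hsrc, hsub⟩ := exists_pos_frequently_Icc_subset
    (hγ.continuousAt.preimage_mem_nhds (e.open_target.mem_nhds (by
      rw [← hfp, hfe]; exact e.map_source hpe)))
    (mapClusterPt_iff_frequently.mp hp _ (e.open_source.mem_nhds hpe))
  refine ⟨p, d, hd, hfp, ?_⟩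
  have := hf.tendsto_nhdsGT_of_lift hfe hγ ht₁ hsub (hν.mono Ioc_subset_Ioi_self)
    (fun t ht => by rw [hνf t ht.1, meridian_add_of_pos hd ht.1]) hsrc
  rwa [← hfp, hfe, e.left_inv hpe] at this

theorem eventually_eq_meridian_of_tendsto (hf : IsLocalHomeomorph f) {μ : ℝ → ℝ → Z}
    (hμ : ContinuousOn (uncurry μ) (univ ×ˢ Ioi 0))
    (hμf : ∀ θ t, 0 < t → f (μ θ t) = meridian θ t) {w : ℝ → Z}
    (hw : ∀ θ, Tendsto (μ θ) (𝓝[>] 0) (𝓝 (w θ))) {θ₀ d : ℝ} (hd : d = 0 ∨ d = π)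
    (hw₀ : f (w θ₀) = meridian (θ₀ + d) 0) :
    ∀ᶠ θ in 𝓝 θ₀, f (w θ) = meridian (θ + d) 0 := by
  obtain ⟨e, hwe, hfe⟩ := hf (w θ₀)
  have hγ : Continuous fun p : ℝ × ℝ => meridian (p.1 + d) p.2 :=
    continuous_meridian.comp ((continuous_fst.add continuous_const).prodMk continuous_snd)
  obtain ⟨N, hN, V, hV, hNV⟩ := mem_nhds_prod_iff.mp <| hγ.continuousAt.preimage_mem_nhds
    (x := (θ₀, 0)) (e.open_target.mem_nhds (by rw [← hw₀, hfe]; exact e.map_source hwe))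
  obtain ⟨t₁, ht₁, hsrc, hsub⟩ := exists_pos_frequently_Icc_subset hV
    ((hw θ₀).eventually (e.open_source.mem_nhds hwe)).frequently
  have hsrc' : ∀ᶠ θ in 𝓝 θ₀, μ θ t₁ ∈ e.source :=
    ((hμ.uncurry_right t₁ ht₁).continuousAt univ_mem).preimage_mem_nhds
      (e.open_source.mem_nhds hsrc)
  filter_upwards [hN, hsrc'] with θ hθ hθsrc
  have hmaps : MapsTo (fun t => meridian (θ + d) t) (Icc 0 t₁) e.target :=
    fun t ht => hNV (mk_mem_prod hθ (hsub ht))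
  have := hf.tendsto_nhdsGT_of_lift hfe (γ := fun t => meridian (θ + d) t)
    (hγ.comp (continuous_const.prodMk continuous_id)) ht₁
    hmaps ((hμ.uncurry_left θ (mem_univ _)).mono Ioc_subset_Ioi_self)
    (fun t ht => by rw [hμf θ t ht.1, meridian_add_of_pos hd ht.1]) hθsrc
  rw [tendsto_nhds_unique (hw θ) this, hfe, e.right_inv (hmaps ⟨le_rfl, ht₁.le⟩)]

end Lifts

end TwistedSphere

open TwistedSphere

theorem stmt_12 (Z : Type*) [TopologicalSpace Z] [CompactSpace Z] [T2Space Z]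
    (f : Z → TwistedSphere) (hf : IsLocalHomeomorph f) :
    ¬ Function.Surjective f := by
  intro hsurj
  obtain ⟨z₀, hz₀⟩ := hsurj (meridian 0 1)
  obtain ⟨μ, hμ, hμf, hμ1⟩ := exists_meridianLift hf hz₀
  have hμθ : ∀ θ, ContinuousOn (μ θ) (Ioi 0) := fun θ => hμ.uncurry_left θ (mem_univ _)
  choose w d hd hfw hw using fun θ => exists_tendsto_nhdsGT_zero hf (hμθ θ) (hμf θ)
  let c θ := equatorCoord (f (w θ))
  have hsq : ∀ θ, c θ ^ 2 = exp (θ * I) ^ 2 := fun θ => by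
    rcases hd θ with h | h <;>
      simp [c, hfw, equatorCoord_meridian_zero, h, add_mul, Complex.exp_add]
  have hcont : Continuous c := continuous_iff_continuousAt.2 fun θ₀ =>
    (by fun_prop : Continuous fun θ : ℝ => exp ((θ + d θ₀ : ℝ) * I)).continuousAt.congr <|
      (eventually_eq_meridian_of_tendsto hf hμ hμf hw (hd θ₀) (hfw θ₀)).mono fun θ h => by
        simp [c, h, equatorCoord_meridian_zero]
  have hper : Periodic c π := fun θ => by
    have hμπ : EqOn (μ (θ + π)) (μ θ) (Ioi 0) :=
      (T2Space.isSeparatedMap f).eqOn_of_comp_eqOn hf.isLocallyInjective isPreconnected_Ioi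
        (hμθ _) (hμθ θ) (fun t ht => by simp [hμf _ t ht, meridian_add_pi θ ht])
        (mem_Ioi.2 one_pos) (by rw [hμ1, hμ1])
    simp only [c, tendsto_nhds_unique (hw (θ + π))
      ((hw θ).congr' (eventuallyEq_of_mem self_mem_nhdsWithin hμπ.symm))]
  exact not_periodic_of_sq_eq_exp_sq hcont hsq hper
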